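/- Consider the iteration x_{k+1} := P_D(α_k x_k + (1 − α_k) T(x_k − v_k g_k)) with T, P_D nonexpansive fixing a minimizer x⋆, ‖g_k‖ = 1, g_k ∈ ∂⋆f(x_k), step-sizes with Σ v_k = ∞ and Σ v_k² < ∞, and limsup α_k < 1. If the minimizer set X⋆ over the feasible set has nonempty interior and the iterates stay in Fix(T), then x_k ∈ X⋆ for some finite k. -/

import Mathlib

/-!
Let `p` be an interior point of the solution set `X⋆`, with a ball of radius `2r` around it
inside `X⋆`. As long as `x k ∉ X⋆`, the point `x k` is feasible but not optimal, so
`f p < f (x k)`; the whole ball `closedBall p r` then lies in the strict sublevel set of `x k`,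
and the normal-cone subgradient `g k` satisfies `⟪g k, x k - p⟫ ≥ r`. Since `p` is fixed by `T`
and lies in `D`, the iteration gives the Fejér-type estimate
`‖x (k+1) - p‖² ≤ ‖x k - p‖² - 2 v k (1 - α k) ⟪g k, x k - p⟫ + (1 - α k) v k²`,
and with `α k < β < 1` eventually, `‖x (k+1) - p‖² ≤ ‖x k - p‖² - (2r(1-β) v k - v k²)`.
The decrements have divergent partial sums because `∑ v k = ∞` and `∑ v k² < ∞`, which is
impossible for a nonnegative sequence.
-/

open Filter Finset Metric

theorem tendsto_sum_range_const_mul_sub_sq {v : ℕ → ℝ} {c : ℝ} (hc : 0 < c)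
    (hv : Tendsto (fun n => ∑ i ∈ range n, v i) atTop atTop)
    (hv2 : Summable fun i => v i ^ 2) :
    Tendsto (fun n => ∑ i ∈ range n, (c * v i - v i ^ 2)) atTop atTop := by
  refine (tendsto_atTop_add_right_of_le _ (-∑' i, v i ^ 2) (hv.const_mul_atTop hc)
    fun n => neg_le_neg (hv2.sum_le_tsum (range n) fun i _ => sq_nonneg (v i))).congr fun n => ?_
  rw [sum_sub_distrib, mul_sum, sub_eq_add_neg]

theorem not_tendsto_sum_range_of_eventually_add_le {d w : ℕ → ℝ} (hd : ∀ n, 0 ≤ d n)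
    (hdw : ∀ᶠ k in atTop, d (k + 1) + w k ≤ d k) :
    ¬ Tendsto (fun n => ∑ i ∈ range n, w i) atTop atTop := by
  intro hw
  obtain ⟨K, hK⟩ := eventually_atTop.mp hdw
  have hbound : ∀ m, ∑ i ∈ range m, w (K + i) ≤ d K := fun m =>
    calc ∑ i ∈ range m, w (K + i) ≤ ∑ i ∈ range m, (d (K + i) - d (K + (i + 1))) :=
          sum_le_sum fun i _ => by
            have := hK (K + i) (Nat.le_add_right K i)
            rw [add_assoc] at this
            linarith
      _ = d K - d (K + m) := sum_range_sub' (fun i => d (K + i)) m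
      _ ≤ d K := sub_le_self _ (hd _)
  obtain ⟨n, hn, hKn⟩ :=
    ((hw.eventually_gt_atTop (∑ i ∈ range K, w i + d K)).and (eventually_ge_atTop K)).exists
  obtain ⟨m, rfl⟩ := Nat.exists_eq_add_of_le hKn
  rw [sum_range_add] at hn
  linarith [hbound m]

section Geometry

variable {H : Type*} [NormedAddCommGroup H] [InnerProductSpace ℝ H]

theorem norm_smul_add_smul_sq_le {a b : ℝ} (ha : 0 ≤ a) (hb : 0 ≤ b) (hab : a + b = 1)
    (x y : H) : ‖a • x + b • y‖ ^ 2 ≤ a * ‖x‖ ^ 2 + b * ‖y‖ ^ 2 := by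
  have hid : ‖a • x + b • y‖ ^ 2 = a * ‖x‖ ^ 2 + b * ‖y‖ ^ 2 - a * b * ‖x - y‖ ^ 2 := by
    rw [norm_add_sq_real, norm_sub_sq_real, norm_smul, norm_smul, real_inner_smul_left,
      real_inner_smul_right, Real.norm_of_nonneg ha, Real.norm_of_nonneg hb, mul_pow, mul_pow]
    obtain rfl := eq_sub_of_add_eq hab
    ring
  rw [hid]
  have : 0 ≤ a * b * ‖x - y‖ ^ 2 := by positivity
  linarith

theorem norm_sub_smul_sub_sq (u g p : H) (s : ℝ) :
    ‖u - s • g - p‖ ^ 2 = ‖u - p‖ ^ 2 - 2 * s * inner ℝ g (u - p) + s ^ 2 * ‖g‖ ^ 2 := by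
  rw [show u - s • g - p = (u - p) - s • g by abel, norm_sub_sq_real, real_inner_smul_right,
    norm_smul, mul_pow, Real.norm_eq_abs, sq_abs, real_inner_comm]
  ring

theorem Convex.norm_sub_le_of_forall_norm_sub_le {D : Set H} (hD : Convex ℝ D) {z q p : H}
    (hq : q ∈ D) (hnearest : ∀ y ∈ D, ‖z - q‖ ≤ ‖z - y‖) (hp : p ∈ D) :
    ‖q - p‖ ≤ ‖z - p‖ := by
  have : Nonempty D := ⟨⟨p, hp⟩⟩
  have hinf : ‖z - q‖ = ⨅ w : D, ‖z - w‖ :=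
    le_antisymm (le_ciInf fun w => hnearest w w.2)
      (ciInf_le ⟨0, fun _ ⟨_, h⟩ => h ▸ norm_nonneg _⟩ (⟨q, hq⟩ : D))
  have hvar : inner ℝ (z - q) (p - q) ≤ 0 :=
    (norm_eq_iInf_iff_real_inner_le_zero hD hq).mp hinf p hp
  have hexp : ‖z - p‖ ^ 2 = ‖z - q‖ ^ 2 - 2 * inner ℝ (z - q) (p - q) + ‖q - p‖ ^ 2 := by
    rw [show z - p = (z - q) - (p - q) by abel, norm_sub_sq_real, norm_sub_rev p q]
  refine le_of_pow_le_pow_left₀ two_ne_zero (norm_nonneg _) ?_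
  linarith [sq_nonneg ‖z - q‖]

theorem norm_proj_averaged_step_sub_sq_le {T P : H → H} {D : Set H}
    (hT : ∀ u w : H, ‖T u - T w‖ ≤ ‖u - w‖) (hD : Convex ℝ D)
    (hP : ∀ z : H, P z ∈ D ∧ ∀ y ∈ D, ‖z - P z‖ ≤ ‖z - y‖)
    {p : H} (hpD : p ∈ D) (hTp : T p = p) {a : ℝ} (ha : a ∈ Set.Icc (0 : ℝ) 1)
    (u g : H) (s : ℝ) :
    ‖P (a • u + (1 - a) • T (u - s • g)) - p‖ ^ 2
      ≤ ‖u - p‖ ^ 2 - 2 * s * (1 - a) * inner ℝ g (u - p) + (1 - a) * s ^ 2 * ‖g‖ ^ 2 := by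
  obtain ⟨ha0, ha1⟩ := ha
  set y := u - s • g
  set z := a • u + (1 - a) • T y
  have hTy : ‖T y - p‖ ≤ ‖y - p‖ := by simpa only [hTp] using hT y p
  calc ‖P z - p‖ ^ 2 ≤ ‖z - p‖ ^ 2 := by
        gcongr
        exact hD.norm_sub_le_of_forall_norm_sub_le (hP z).1 (hP z).2 hpD
    _ = ‖a • (u - p) + (1 - a) • (T y - p)‖ ^ 2 := by congr 2; module
    _ ≤ a * ‖u - p‖ ^ 2 + (1 - a) * ‖T y - p‖ ^ 2 :=
        norm_smul_add_smul_sq_le ha0 (sub_nonneg.mpr ha1) (by ring) _ _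
    _ ≤ a * ‖u - p‖ ^ 2 + (1 - a) * ‖y - p‖ ^ 2 := by gcongr
    _ = _ := by rw [norm_sub_smul_sub_sq]; ring

theorem le_inner_sub_of_closedBall_subset {f : H → ℝ} {p x g : H} {r : ℝ} (hr : 0 ≤ r)
    (hball : closedBall p r ⊆ {y | f y ≤ f p}) (hg : ‖g‖ = 1)
    (hnormal : ∀ y, f y < f x → inner ℝ g (y - x) ≤ 0) (hpx : f p < f x) :
    r ≤ inner ℝ g (x - p) := by
  have hmem : p + r • g ∈ closedBall p r := by
    rw [mem_closedBall, dist_eq_norm, add_sub_cancel_left, norm_smul, hg, mul_one,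
      Real.norm_of_nonneg hr]
  have h := hnormal _ ((hball hmem).trans_lt hpx)
  rw [show p + r • g - x = r • g - (x - p) by abel, inner_sub_right, real_inner_smul_right,
    real_inner_self_eq_norm_sq, hg] at h
  linarith

end Geometry

theorem stmt_19_general {H : Type*} [NormedAddCommGroup H] [InnerProductSpace ℝ H]
    (f : H → ℝ)
    (T : H → H) (hT : ∀ u w : H, ‖T u - T w‖ ≤ ‖u - w‖)
    (D : Set H) (hDconv : Convex ℝ D)
    (P : H → H) (hP : ∀ z : H, P z ∈ D ∧ ∀ y ∈ D, ‖z - P z‖ ≤ ‖z - y‖)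
    (Xstar : Set H)
    (hXstar : Xstar = {z : H | T z = z ∧ z ∈ D ∧ ∀ y : H, T y = y → y ∈ D → f z ≤ f y})
    (hint : (interior Xstar).Nonempty)
    (v : ℕ → ℝ) (hv : ∀ k, 0 < v k)
    (hvsum : Filter.Tendsto (fun n => ∑ i ∈ Finset.range n, v i)
      Filter.atTop Filter.atTop)
    (hvsq : Summable (fun k => v k ^ 2))
    (x : ℕ → H) (g : ℕ → H) (α : ℕ → ℝ)
    (hα : ∀ k, α k ∈ Set.Ioc (0:ℝ) 1)
    (hlimsup : Filter.limsup α Filter.atTop < 1)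
    (hgk : ∀ k, ∀ y : H, f y < f (x k) → (inner ℝ (g k) (y - x k) : ℝ) ≤ 0)
    (hgnorm : ∀ k, ‖g k‖ = 1)
    (hstep : ∀ k, x (k + 1) = P (α k • x k + (1 - α k) • T (x k - v k • g k)))
    (hxfix : ∀ k, T (x k) = x k) :
    ∃ k, x k ∈ Xstar := by
  by_contra! hnone
  subst hXstar
  obtain ⟨p, hp⟩ := hint
  obtain ⟨ε, hε, hballX⟩ := isOpen_iff.mp isOpen_interior p hp
  obtain ⟨hTp, hpD, hpmin⟩ := interior_subset hp
  have hsub : closedBall p (ε / 2) ⊆ {y | f y ≤ f p} := fun y hy =>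
    (interior_subset (hballX (closedBall_subset_ball (half_lt_self hε) hy))).2.2 p hTp hpD
  have hgap : ∀ k, f p < f (x (k + 1)) := fun k => by
    have hxD : x (k + 1) ∈ D := hstep k ▸ (hP _).1
    obtain ⟨y, hTy, hyD, hy⟩ : ∃ y, T y = y ∧ y ∈ D ∧ f y < f (x (k + 1)) := by
      simpa [hxfix, hxD] using hnone (k + 1)
    exact (hpmin y hTy hyD).trans_lt hy
  obtain ⟨β, hβL, hβ1⟩ := exists_between hlimsup
  have hαβ : ∀ᶠ k in atTop, α k < β :=
    eventually_lt_of_limsup_lt hβL (isBoundedUnder_of_eventually_le (.of_forall fun k => (hα k).2))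
  refine not_tendsto_sum_range_of_eventually_add_le (d := fun k => ‖x k - p‖ ^ 2)
    (fun _ => sq_nonneg _) ?_ (tendsto_sum_range_const_mul_sub_sq
      (mul_pos hε (sub_pos.mpr hβ1)) hvsum hvsq)
  filter_upwards [hαβ, eventually_ge_atTop 1] with k hkβ hk1
  obtain ⟨m, rfl⟩ := Nat.exists_eq_add_of_le' hk1
  have hsep := le_inner_sub_of_closedBall_subset (half_pos hε).le hsub (hgnorm _) (hgk _) (hgap m)
  have hfejer := norm_proj_averaged_step_sub_sq_le hT hDconv hP hpD hTp
    (Set.Ioc_subset_Icc_self (hα (m + 1))) (x (m + 1)) (g (m + 1)) (v (m + 1))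
  rw [← hstep, hgnorm, one_pow, mul_one] at hfejer
  obtain ⟨hα0, hα1⟩ := hα (m + 1)
  have hv0 := (hv (m + 1)).le
  have hdecr : ε * (1 - β) * v (m + 1)
      ≤ 2 * v (m + 1) * (1 - α (m + 1)) * inner ℝ (g (m + 1)) (x (m + 1) - p) :=
    calc ε * (1 - β) * v (m + 1) ≤ ε * (1 - α (m + 1)) * v (m + 1) := by gcongr
      _ = 2 * v (m + 1) * (1 - α (m + 1)) * (ε / 2) := by ring
      _ ≤ _ := by gcongr
  have hsq : (1 - α (m + 1)) * v (m + 1) ^ 2 ≤ v (m + 1) ^ 2 :=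
    mul_le_of_le_one_left (sq_nonneg _) (by linarith)
  linarith

/-- Finite convergence: if the minimizer set over Fix(T) ∩ D has nonempty
interior and the iterates stay in Fix(T), then some iterate is a minimizer. -/
theorem stmt_19 {H : Type*} [NormedAddCommGroup H] [InnerProductSpace ℝ H]
    (f : H → ℝ) (hcont : Continuous f)
    (hqc : ∀ u w : H, ∀ t : ℝ, t ∈ Set.Icc (0:ℝ) 1 →
      f ((1 - t) • u + t • w) ≤ max (f u) (f w))
    (T : H → H) (hT : ∀ u w : H, ‖T u - T w‖ ≤ ‖u - w‖)
    (D : Set H) (hDc : IsClosed D) (hDconv : Convex ℝ D)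
    (P : H → H) (hP : ∀ z : H, P z ∈ D ∧ ∀ y ∈ D, ‖z - P z‖ ≤ ‖z - y‖)
    (Xstar : Set H)
    (hXstar : Xstar = {z : H | T z = z ∧ z ∈ D ∧ ∀ y : H, T y = y → y ∈ D → f z ≤ f y})
    (hint : (interior Xstar).Nonempty)
    (v : ℕ → ℝ) (hv : ∀ k, 0 < v k)
    (hvsum : Filter.Tendsto (fun n => ∑ i ∈ Finset.range n, v i)
      Filter.atTop Filter.atTop)
    (hvsq : Summable (fun k => v k ^ 2))
    (x : ℕ → H) (g : ℕ → H) (α : ℕ → ℝ)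
    (hα : ∀ k, α k ∈ Set.Ioc (0:ℝ) 1)
    (hlimsup : Filter.limsup α Filter.atTop < 1)
    (hgk : ∀ k, ∀ y : H, f y < f (x k) → (inner ℝ (g k) (y - x k) : ℝ) ≤ 0)
    (hgnorm : ∀ k, ‖g k‖ = 1)
    (hstep : ∀ k, x (k + 1) = P (α k • x k + (1 - α k) • T (x k - v k • g k)))
    (hxfix : ∀ k, T (x k) = x k) :
    ∃ k, x k ∈ Xstar :=
  stmt_19_general f T hT D hDconv P hP Xstar hXstar hint v hv hvsum hvsq x g α hα hlimsup hgk hgnorm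
    hstep hxfix
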